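/- Let (N, G, φ, A) be a crossed module of groupoids and N ⋊ G its crossed product groupoid, let π : N ⋊ G → G be the projection functor, ρ : Bℤ × (N ⋊ G) → N ⋊ G the functor ρ(k, g : (x,n) ⟶ (y,m)) = φ_x(nᵏ) ≫ g, ι : N⋊G_{p−1} → ℤ × N⋊G_{p−1} the map c ↦ (1, c), and for 1 ≤ i ≤ p let φᵢ : ℤ × N⋊G_{p−1} → (Bℤ × (N ⋊ G))_p be the map inserting k at the i-th ℤ-position and the identity morphism at the i-th vertex of the (N ⋊ G)-chain. Define Φ := Σ_{i=1}^{p} (−1)^i (π ∘ ρ ∘ φᵢ ∘ ι)* : C^p(G) → C^{p−1}(N ⋊ G), where C^p denotes ℤ-valued functions on composable p-tuples. Then Φ = −T₁; that is, for every c : G_p → ℤ one has Φ(c) = − Σ_{i=0}^{p−1} (−1)^i (c ∘ f̃ᵢ). -/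

import Mathlib

open CategoryTheory

universe v u w

structure CrossedModuleGpd (G : Type u) [Groupoid.{v, u} G]
    (N : G → Type w) [∀ x, Group (N x)] where
  φ : ∀ x : G, N x →* (x ⟶ x)
  A : ∀ {x y : G}, (x ⟶ y) → (N x ≃* N y)
  A_id : ∀ x : G, A (𝟙 x) = MulEquiv.refl (N x)
  A_comp : ∀ {x y z : G} (g : x ⟶ y) (h : y ⟶ z), A (g ≫ h) = (A g).trans (A h)
  equivariance : ∀ {x y : G} (g : x ⟶ y) (n : N x),
    φ y (A g n) = Groupoid.inv g ≫ φ x n ≫ g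
  peiffer : ∀ {x : G} (m n : N x), A (φ x m) n = m⁻¹ * n * m

variable {G : Type u} [Groupoid.{v, u} G] {N : G → Type w} [∀ x, Group (N x)]

def CrossedProd (_C : CrossedModuleGpd G N) : Type (max u w) := Σ x : G, N x

instance CrossedProd.category (C : CrossedModuleGpd G N) : Category (CrossedProd C) where
  Hom a b := { g : a.1 ⟶ b.1 // C.A g a.2 = b.2 }
  id a := ⟨𝟙 a.1, by rw [C.A_id]; rfl⟩
  comp {a b c} f g := ⟨f.1 ≫ g.1, by rw [C.A_comp]; simp [f.2, g.2]⟩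
  id_comp f := by apply Subtype.ext; simp
  comp_id f := by apply Subtype.ext; simp
  assoc f g h := by apply Subtype.ext; simp

abbrev BZ : Type := SingleObj (Multiplicative ℤ)

/-- The projection functor `π : N ⋊ G ⥤ G`. -/
def crossedProj (C : CrossedModuleGpd G N) : CrossedProd C ⥤ G where
  obj a := a.1
  map f := f.1
  map_id _ := rfl
  map_comp _ _ := rfl

/-- The natural groupoid homomorphism `ρ : Bℤ × (N ⋊ G) ⥤ N ⋊ G`: the identity on
objects, sending a morphism `(k, g : (x,n) ⟶ (y,m))` to `φ_x(nᵏ) ≫ g`. -/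
def crossedRho (C : CrossedModuleGpd G N) : BZ × CrossedProd C ⥤ CrossedProd C where
  obj X := X.2
  map {X Y} f := ⟨C.φ X.2.1 (X.2.2 ^ Multiplicative.toAdd f.1) ≫ f.2.1, by
    rw [C.A_comp]
    show C.A f.2.1 (C.A (C.φ X.2.1 (X.2.2 ^ Multiplicative.toAdd f.1)) X.2.2) = Y.2.2
    rw [C.peiffer]
    have : (X.2.2 ^ Multiplicative.toAdd f.1)⁻¹ * X.2.2 *
        (X.2.2 ^ Multiplicative.toAdd f.1) = X.2.2 := by group
    rw [this, f.2.2]⟩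
  map_id X := by
    apply Subtype.ext
    show C.φ X.2.1 (X.2.2 ^ Multiplicative.toAdd (1 : Multiplicative ℤ)) ≫ 𝟙 X.2.1 = 𝟙 X.2.1
    rw [Category.comp_id]
    show C.φ X.2.1 (X.2.2 ^ (0 : ℤ)) = 𝟙 X.2.1
    rw [zpow_zero, map_one]
    rfl
  map_comp {X Y Z} f g := by
    apply Subtype.ext
    show C.φ X.2.1 (X.2.2 ^ Multiplicative.toAdd (α := ℤ) (f.1 ≫ g.1)) ≫ (f.2.1 ≫ g.2.1) =
      (C.φ X.2.1 (X.2.2 ^ Multiplicative.toAdd f.1) ≫ f.2.1) ≫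
        (C.φ Y.2.1 (Y.2.2 ^ Multiplicative.toAdd g.1) ≫ g.2.1)
    have h1 : C.φ Y.2.1 (Y.2.2 ^ Multiplicative.toAdd g.1) =
        Groupoid.inv f.2.1 ≫ C.φ X.2.1 (X.2.2 ^ Multiplicative.toAdd g.1) ≫ f.2.1 := by
      have e : Y.2.2 ^ Multiplicative.toAdd g.1 =
          C.A f.2.1 (X.2.2 ^ Multiplicative.toAdd g.1) := by
        rw [map_zpow, f.2.2]
      rw [e, C.equivariance]
    have e2 : Multiplicative.toAdd (α := ℤ) (f.1 ≫ g.1) =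
        Multiplicative.toAdd f.1 + Multiplicative.toAdd g.1 :=
      add_comm (Multiplicative.toAdd g.1) (Multiplicative.toAdd f.1)
    have h2 : C.φ X.2.1 (X.2.2 ^ Multiplicative.toAdd (α := ℤ) (f.1 ≫ g.1)) =
        C.φ X.2.1 (X.2.2 ^ Multiplicative.toAdd f.1) ≫
          C.φ X.2.1 (X.2.2 ^ Multiplicative.toAdd g.1) := by
      show _ = C.φ X.2.1 (X.2.2 ^ Multiplicative.toAdd f.1) *
        C.φ X.2.1 (X.2.2 ^ Multiplicative.toAdd g.1)
      rw [← map_mul, ← zpow_add, e2]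
    rw [h1, h2]
    simp only [Category.assoc]
    congr 1
    rw [← Category.assoc f.2.1 (Groupoid.inv f.2.1), Groupoid.comp_inv, Category.id_comp]

/-- A composable `p`-tuple of morphisms in a category `D`: a chain
`x₀ →g₁ x₁ →g₂ ⋯ →g_p x_p`. -/
structure Chain (D : Type u) [Category.{v} D] (p : ℕ) where
  obj : Fin (p + 1) → D
  map : ∀ i : Fin p, obj i.castSucc ⟶ obj i.succ

namespace Chain

variable {D : Type u} [Category.{v} D]

/-- The initial vertex `x₀` of a chain. -/
def head {p : ℕ} (c : Chain D p) : D := c.obj ⟨0, Nat.succ_pos p⟩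

/-- The composite `g₁ ≫ ⋯ ≫ g_k : x₀ ⟶ x_k` of the first `k` morphisms of a chain
(the identity for `k = 0`). -/
def compToAux {p : ℕ} (c : Chain D p) : ∀ (k : ℕ) (h : k < p + 1), (c.head ⟶ c.obj ⟨k, h⟩)
  | 0, _ => 𝟙 c.head
  | (k + 1), h => c.compToAux k (by omega) ≫ c.map ⟨k, by omega⟩

/-- The composite `g₁ ≫ ⋯ ≫ g_i : x₀ ⟶ x_i` of the first `i` morphisms of a chain. -/
def compTo {p : ℕ} (c : Chain D p) (i : Fin (p + 1)) : c.head ⟶ c.obj i :=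
  c.compToAux i.val i.isLt

/-- The underlying `p`-tuple of arrows of a chain. -/
def arrows {p : ℕ} (c : Chain D p) (i : Fin p) : Arrow D := Arrow.mk (c.map i)

/-- The image of a chain under a functor. -/
def mapF {E : Type*} [Category E] (F : D ⥤ E) {p : ℕ} (c : Chain D p) : Chain E p where
  obj j := F.obj (c.obj j)
  map i := F.map (c.map i)

/-- Insertion of a loop `a : xᵢ ⟶ xᵢ` at the `i`-th vertex of a chain, producing a
composable `(q+1)`-tuple from a composable `q`-tuple. -/
def insert {q : ℕ} (c : Chain D q) (i : Fin (q + 1)) (a : c.obj i ⟶ c.obj i) :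
    Chain D (q + 1) where
  obj j := c.obj ⟨if (j : ℕ) ≤ (i : ℕ) then (j : ℕ) else (j : ℕ) - 1, by split <;> omega⟩
  map j :=
    if h : (j : ℕ) < (i : ℕ) then
      eqToHom (congrArg c.obj (Fin.ext (by simp only [Fin.coe_castSucc, Fin.val_succ, Fin.val_mk]; split <;> omega))) ≫ c.map ⟨(j : ℕ), by omega⟩ ≫
        eqToHom (congrArg c.obj (Fin.ext (by simp only [Fin.coe_castSucc, Fin.val_succ, Fin.val_mk]; split <;> omega)))
    else if h' : (j : ℕ) = (i : ℕ) then
      eqToHom (congrArg c.obj (Fin.ext (by simp only [Fin.coe_castSucc, Fin.val_succ, Fin.val_mk]; split <;> omega))) ≫ a ≫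
        eqToHom (congrArg c.obj (Fin.ext (by simp only [Fin.coe_castSucc, Fin.val_succ, Fin.val_mk]; split <;> omega)))
    else
      eqToHom (congrArg c.obj (Fin.ext (by simp only [Fin.coe_castSucc, Fin.val_succ, Fin.val_mk]; split <;> omega))) ≫
        c.map ⟨(j : ℕ) - 1, by omega⟩ ≫
        eqToHom (congrArg c.obj (Fin.ext (by simp only [Fin.coe_castSucc, Fin.val_succ, Fin.val_mk]; split <;> omega)))

/-- The `j`-th face map of the nerve: drop `g₁` (`j = 0`), compose `gⱼ ≫ g_{j+1}`
(`0 < j < p+1`), or drop `g_{p+1}` (`j = p+1`). -/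
def face {p : ℕ} (c : Chain D (p + 1)) (j : Fin (p + 2)) : Chain D p where
  obj m := c.obj ⟨if (m : ℕ) < (j : ℕ) then (m : ℕ) else (m : ℕ) + 1, by split <;> omega⟩
  map m :=
    if h : (m : ℕ) + 1 < (j : ℕ) then
      eqToHom (congrArg c.obj (Fin.ext (by simp only [Fin.coe_castSucc, Fin.val_succ, Fin.val_mk]; split <;> omega))) ≫ c.map ⟨(m : ℕ), by omega⟩ ≫
        eqToHom (congrArg c.obj (Fin.ext (by simp only [Fin.coe_castSucc, Fin.val_succ, Fin.val_mk]; split <;> omega)))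
    else if h' : (m : ℕ) + 1 = (j : ℕ) then
      eqToHom (congrArg c.obj (Fin.ext (by simp only [Fin.coe_castSucc, Fin.val_succ, Fin.val_mk]; split <;> omega))) ≫
        (c.map ⟨(m : ℕ), by omega⟩ ≫ c.map ⟨(m : ℕ) + 1, by omega⟩) ≫
        eqToHom (congrArg c.obj (Fin.ext (by simp only [Fin.coe_castSucc, Fin.val_succ, Fin.val_mk]; split <;> omega)))
    else
      eqToHom (congrArg c.obj (Fin.ext (by simp only [Fin.coe_castSucc, Fin.val_succ, Fin.val_mk]; split <;> omega))) ≫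
        c.map ⟨(m : ℕ) + 1, by omega⟩ ≫
        eqToHom (congrArg c.obj (Fin.ext (by simp only [Fin.coe_castSucc, Fin.val_succ, Fin.val_mk]; split <;> omega)))

end Chain

/-- The simplicial coboundary operator `∂* : C^p → C^{p+1}` on `ℤ`-valued singular
(cochain) functions on composable tuples: `(∂*f)(c) = Σⱼ (−1)ʲ f(ε̄ʲ c)`. -/
def cobdry (D : Type u) [Category.{v} D] (p : ℕ) (f : Chain D p → ℤ) :
    Chain D (p + 1) → ℤ :=
  fun c => ∑ j : Fin (p + 2), (-1) ^ (j : ℕ) * f (c.face j)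

variable {G : Type u} [Groupoid.{v, u} G] {N : G → Type w} [∀ x, Group (N x)]

/-- The identification `N⋊G_q ≅ (N ⋊ G)_q`: the pair `(n, g₁, …, g_q)` corresponds to
the chain of the crossed product groupoid whose `k`-th vertex is `(x_k, A(g₁ ≫ ⋯ ≫ g_k) n)`. -/
def toChain (C : CrossedModuleGpd G N) {q : ℕ} (c : Chain G q) (n : N c.head) :
    Chain (CrossedProd C) q where
  obj j := ⟨c.obj j, C.A (c.compTo j) n⟩
  map i := ⟨c.map i, by
    show C.A (c.map i) (C.A (c.compTo i.castSucc) n) = C.A (c.compTo i.succ) n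
    rw [show c.compTo i.succ = c.compTo i.castSucc ≫ c.map i from rfl, C.A_comp]
    rfl⟩

/-- The chain of `Bℤ` of length `q+1` whose `ℤ`-components are `(0, …, 0, k, 0, …, 0)`
with `k` in position `i`. -/
def zChain (q : ℕ) (k : Multiplicative ℤ) (i : Fin (q + 1)) : Chain BZ (q + 1) where
  obj _ := SingleObj.star (Multiplicative ℤ)
  map j := if j = i then k else 1

/-- Combining two chains of the same length into a chain of the product category. -/
def prodChain {D : Type*} [Category D] {E : Type*} [Category E] {p : ℕ}
    (c : Chain D p) (d : Chain E p) : Chain (D × E) p where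
  obj j := (c.obj j, d.obj j)
  map i := (c.map i, d.map i)

/-- The Tu–Xu map `f̃ᵢ : N⋊G_{p−1} → G_p`,
`f̃ᵢ(n, g₁, …, g_{p−1}) = (g₁, …, gᵢ, φ_{xᵢ}(A(g₁ ≫ ⋯ ≫ gᵢ) n), g_{i+1}, …, g_{p−1})`. -/
def tuXu (C : CrossedModuleGpd G N) {q : ℕ} (i : Fin (q + 1)) (c : Chain G q)
    (n : N c.head) : Chain G (q + 1) :=
  c.insert i (C.φ (c.obj i) (C.A (c.compTo i) n))

/-!
The Bℤ-part of `φᵢ(1, ·)` is the constant identity chain with the generator inserted at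
position `i`, and insertion of a loop commutes with pairing chains and with applying functors.
On the constant part `ρ` is the identity, because `φ(n⁰) = 1`; on the inserted loop `(1, 𝟙)`
it gives `φ_{xᵢ}(A(g₁ ≫ ⋯ ≫ gᵢ) n)`. Hence `π ∘ ρ ∘ φᵢ ∘ ι = f̃ᵢ`, and the signs
`(−1)^{i+1} = −(−1)^i` give `Φ = −T₁`.
-/

namespace Chain

variable {D : Type*} [Category D]

theorem hext {p : ℕ} {c d : Chain D p} (h : c.obj = d.obj) (h' : ∀ i, c.map i ≍ d.map i) :
    c = d := by
  cases c; cases d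
  cases h
  congr 1
  funext i
  exact eq_of_heq (h' i)

def const (x : D) (p : ℕ) : Chain D p where
  obj _ := x
  map _ := 𝟙 x

theorem insert_congr {q : ℕ} {c d : Chain D q} (h : c = d) (i : Fin (q + 1))
    {a : c.obj i ⟶ c.obj i} {b : d.obj i ⟶ d.obj i} (hab : a ≍ b) :
    c.insert i a = d.insert i b := by
  subst h; cases hab; rfl

theorem mapF_insert {E : Type*} [Category E] (F : D ⥤ E) {q : ℕ} (c : Chain D q)
    (i : Fin (q + 1)) (a : c.obj i ⟶ c.obj i) :
    mapF F (c.insert i a) = (mapF F c).insert i (F.map a) := by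
  refine hext rfl fun j => heq_of_eq ?_
  simp only [mapF, insert]
  split_ifs <;> simp [eqToHom_map]

end Chain

theorem prodChain_insert {D : Type*} [Category D] {E : Type*} [Category E] {q : ℕ}
    (c : Chain D q) (d : Chain E q) (i : Fin (q + 1))
    (a : c.obj i ⟶ c.obj i) (b : d.obj i ⟶ d.obj i) :
    prodChain (c.insert i a) (d.insert i b) = (prodChain c d).insert i (a, b) := by
  refine Chain.hext rfl fun j => heq_of_eq ?_
  simp only [prodChain, Chain.insert]
  apply Prod.ext <;> simp only [apply_dite Prod.fst, apply_dite Prod.snd] <;> split_ifs <;> simp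

theorem zChain_eq_insert (q : ℕ) (k : Multiplicative ℤ) (i : Fin (q + 1)) :
    zChain q k i = (Chain.const (SingleObj.star (Multiplicative ℤ)) q).insert i k := by
  refine Chain.hext rfl fun j => heq_of_eq ?_
  simp only [zChain, Chain.const, Chain.insert]
  rcases lt_trichotomy j i with h | rfl | h
  · simp [h, h.ne]
  · simp
  · simp [h.ne', h.not_gt, Fin.val_ne_of_ne h.ne']

theorem crossedRho_map_val (C : CrossedModuleGpd G N) {X Y : BZ × CrossedProd C}
    (f : X ⟶ Y) :
    ((crossedRho C).map f).1 = C.φ X.2.1 (X.2.2 ^ Multiplicative.toAdd f.1) ≫ f.2.1 := rfl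

theorem crossedRho_mapF_prodChain_const (C : CrossedModuleGpd G N) {q : ℕ}
    (d : Chain (CrossedProd C) q) :
    Chain.mapF (crossedRho C) (prodChain (Chain.const (SingleObj.star _) q) d) = d := by
  refine Chain.hext rfl fun j => heq_of_eq (Subtype.ext ?_)
  simp only [Chain.mapF, prodChain, Chain.const, crossedRho_map_val, SingleObj.id_as_one,
    toAdd_one, zpow_zero, map_one]
  exact Category.id_comp _

theorem mapF_crossedProj_crossedRho_insert_eq_tuXu (C : CrossedModuleGpd G N) {q : ℕ}
    (c : Chain G q) (n : N c.head) (i : Fin (q + 1)) :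
    Chain.mapF (crossedProj C)
      (Chain.mapF (crossedRho C)
        (prodChain (zChain q (Multiplicative.ofAdd 1) i)
          ((toChain C c n).insert i (𝟙 ((toChain C c n).obj i))))) = tuXu C i c n := by
  rw [zChain_eq_insert, prodChain_insert, Chain.mapF_insert]
  erw [Chain.mapF_insert]
  refine Chain.insert_congr ?_ i (heq_of_eq ?_)
  · rw [crossedRho_mapF_prodChain_const]
    rfl
  · exact (Category.comp_id _).trans (congrArg _ (zpow_one _))

/-- The transgression map `Φ = Σᵢ (−1)ⁱ (π ∘ ρ ∘ φᵢ ∘ ι)*` equals `−T₁`: for every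
cochain `f : G_p → ℤ` and every `(n, g₁, …, g_{p−1}) ∈ N⋊G_{p−1}`,
`Φ(f) = − Σᵢ (−1)ⁱ (f ∘ f̃ᵢ)`. -/
theorem stmt15 (C : CrossedModuleGpd G N) (q : ℕ) (f : Chain G (q + 1) → ℤ)
    (c : Chain G q) (n : N c.head) :
    (∑ i : Fin (q + 1), (-1) ^ ((i : ℕ) + 1) *
      f (Chain.mapF (crossedProj C)
          (Chain.mapF (crossedRho C)
            (prodChain (zChain q (Multiplicative.ofAdd 1) i)
              ((toChain C c n).insert i (𝟙 ((toChain C c n).obj i))))))) =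
    - ∑ i : Fin (q + 1), (-1) ^ (i : ℕ) * f (tuXu C i c n) := by
  rw [← Finset.sum_neg_distrib]
  refine Finset.sum_congr rfl fun i _ => ?_
  rw [mapF_crossedProj_crossedRho_insert_eq_tuXu, pow_succ]
  ring
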